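/- Let u = s₁…s_N be a nonempty word over {a,a⁻¹,d,d⁻¹} with a palindrome-pattern ι. Then the subwords s₂…s_{ι(1)−1} (the segment strictly between index 1 and its mirror) and s_{ι(1)+1}…s_N (the segment strictly after the mirror of 1) each admit a palindrome-pattern. In particular ι preserves the index sets {2,…,ι(1)−1} and {ι(1)+1,…,N}. -/

import Mathlib

/-!
A palindrome-pattern restricts to any set of positions that it maps to itself: the nesting
condition only involves the relative order of positions, which an order embedding preserves.
The mirror `m = ι 0` of the first position nests everything strictly between `0` and `m`, so `ι`
maps `(0, m)` to itself. If some `j > m` had `ι j < m`, then `ι j` would lie in `(0, m)` (as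
`ι j = 0` means `j = m` and `ι j = m` means `j = 0`), and so would `j = ι (ι j)`; hence `ι` also
maps `(m, N)` to itself.
-/

/-- The four-letter alphabet `{a, a⁻¹, d, d⁻¹}`. -/
inductive ADLetter : Type
  | a : ADLetter
  | ainv : ADLetter
  | d : ADLetter
  | dinv : ADLetter
deriving DecidableEq

/-- The formal inverse on the alphabet. -/
def ADLetter.inv : ADLetter → ADLetter
  | .a => .ainv
  | .ainv => .a
  | .d => .dinv
  | .dinv => .d

/-- `ι` is a palindrome-pattern on the word `w`. -/
def IsPalPattern (w : List ADLetter) (ι : Equiv.Perm (Fin w.length)) : Prop :=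
  (∀ i, ι i ≠ i) ∧ (∀ i, ι (ι i) = i) ∧
  (∀ i, w.get (ι i) = w.get i ∨ w.get (ι i) = (w.get i).inv) ∧
  (∀ i j, min i (ι i) < j → j < max i (ι i) → min i (ι i) < ι j ∧ ι j < max i (ι i))

/-- `w` admits a palindrome-pattern. -/
def HasPalindromePattern (w : List ADLetter) : Prop :=
  ∃ ι : Equiv.Perm (Fin w.length), IsPalPattern w ι

namespace IsPalPattern

variable {w : List ADLetter} {ι : Equiv.Perm (Fin w.length)}

theorem hasPalindromePattern_of_orderEmbedding (hι : IsPalPattern w ι) {L : List ADLetter}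
    (e : Fin L.length ↪o Fin w.length) (hget : ∀ k, L.get k = w.get (e k))
    (hrange : ∀ k, ι (e k) ∈ Set.range e) : HasPalindromePattern L := by
  obtain ⟨hfix, hinv, hlet, hnest⟩ := hι
  choose f hf using hrange
  have hinvol : Function.Involutive f := fun k => e.injective <| by rw [hf, hf, hinv]
  refine ⟨hinvol.toPerm f, fun k hk => hfix (e k) ?_, hinvol, fun k => ?_, fun i j hij hji => ?_⟩
  · rw [← hf, show f k = k from hk]
  · simp only [Function.Involutive.coe_toPerm, hget, hf]
    exact hlet (e k)
  · simp only [Function.Involutive.coe_toPerm] at hij hji ⊢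
    rw [← e.lt_iff_lt, e.monotone.map_min, hf] at hij
    rw [← e.lt_iff_lt, e.monotone.map_max, hf] at hji
    rw [← e.lt_iff_lt, ← e.lt_iff_lt, e.monotone.map_min, e.monotone.map_max, hf, hf]
    exact hnest (e i) (e j) hij hji

theorem hasPalindromePattern_of_factor (hι : IsPalPattern w ι) {L : List ADLetter} (a : ℕ)
    (hlen : a + L.length ≤ w.length)
    (hget : ∀ k (hk : k < L.length), L[k] = w[a + k])
    (hmaps : ∀ i : Fin w.length, a ≤ i.val → i.val < a + L.length →
      a ≤ (ι i).val ∧ (ι i).val < a + L.length) :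
    HasPalindromePattern L := by
  let e : Fin L.length ↪o Fin w.length :=
    OrderEmbedding.ofStrictMono (fun k => ⟨a + k, by omega⟩) fun _ _ h =>
      Fin.mk_lt_mk.2 (Nat.add_lt_add_left h a)
  have he : ∀ k, (e k).val = a + k := fun _ => rfl
  refine hι.hasPalindromePattern_of_orderEmbedding e (fun k => hget k k.isLt) fun k => ?_
  obtain ⟨h₁, h₂⟩ := hmaps (e k) (Nat.le_add_right a k) (by rw [he]; omega)
  exact ⟨⟨(ι (e k)).val - a, by omega⟩, Fin.ext (by rw [he]; dsimp only; omega)⟩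

theorem val_mirror_first_pos (hι : IsPalPattern w ι) (hN : 0 < w.length) :
    0 < (ι ⟨0, hN⟩).val :=
  Nat.pos_of_ne_zero fun h => hι.1 ⟨0, hN⟩ (Fin.ext h)

theorem mapsTo_before_mirror_first (hι : IsPalPattern w ι) (hN : 0 < w.length)
    (j : Fin w.length) (h₀ : 0 < j.val) (hm : j.val < (ι ⟨0, hN⟩).val) :
    0 < (ι j).val ∧ (ι j).val < (ι ⟨0, hN⟩).val := by
  obtain ⟨-, -, -, hnest⟩ := hι
  have hle : (⟨0, hN⟩ : Fin w.length) ≤ ι ⟨0, hN⟩ := Nat.zero_le _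
  simpa only [min_eq_left hle, max_eq_right hle, Fin.lt_def] using hnest ⟨0, hN⟩ j h₀ hm

theorem mapsTo_after_mirror_first (hι : IsPalPattern w ι) (hN : 0 < w.length)
    (j : Fin w.length) (hj : (ι ⟨0, hN⟩).val < j.val) :
    (ι ⟨0, hN⟩).val < (ι j).val := by
  have hinv := hι.2.1
  by_contra! hle
  have hm : (ι j).val ≠ (ι ⟨0, hN⟩).val := fun h => by
    rw [ι.injective (Fin.ext h)] at hj
    exact (hj.trans (hι.val_mirror_first_pos hN)).false
  have h₀ : (ι j).val ≠ 0 := fun h => by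
    rw [← hinv j, show ι j = ⟨0, hN⟩ from Fin.ext h] at hj
    exact hj.false
  have := hι.mapsTo_before_mirror_first hN (ι j) (by omega) (by omega)
  rw [hinv j] at this
  omega

end IsPalPattern

/-- if `w` is nonempty with palindrome-pattern `ι`, then the segment strictly
between the first index and its mirror, and the segment strictly after the mirror, each admit
a palindrome-pattern; in particular `ι` preserves these two index sets. -/
theorem palindromePattern_split (w : List ADLetter) (hN : 0 < w.length)
    (ι : Equiv.Perm (Fin w.length)) (hι : IsPalPattern w ι) :
    HasPalindromePattern ((w.take (ι ⟨0, hN⟩).val).drop 1) ∧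
    HasPalindromePattern (w.drop ((ι ⟨0, hN⟩).val + 1)) ∧
    (∀ j : Fin w.length, 0 < j.val → j.val < (ι ⟨0, hN⟩).val →
      0 < (ι j).val ∧ (ι j).val < (ι ⟨0, hN⟩).val) ∧
    (∀ j : Fin w.length, (ι ⟨0, hN⟩).val < j.val → (ι ⟨0, hN⟩).val < (ι j).val) := by
  have before := hι.mapsTo_before_mirror_first hN
  have after := hι.mapsTo_after_mirror_first hN
  refine ⟨?_, ?_, before, after⟩
  · refine hι.hasPalindromePattern_of_factor 1 (by simp; omega)
      (fun _ _ => by simp [List.getElem_take, Nat.add_comm])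
      fun i h₁ h₂ => ?_
    simp only [List.length_drop, List.length_take] at h₂ ⊢
    have := before i (by omega) (by omega)
    omega
  · refine hι.hasPalindromePattern_of_factor _ (by simp)
      (fun _ _ => List.getElem_drop) fun i h₁ h₂ => ?_
    have := after i (by omega)
    have := (ι i).isLt
    simp only [List.length_drop]
    omega
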